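/- For a finite set X with |X| = n ≥ 2 and J ⊆ X with |J| = k ≥ 2, the function f_J (f_J(A) = 1 iff J ∩ A ≠ ∅) satisfies the elementary inequality (i,j|K) with equality, i.e., f_J(iK)+f_J(jK)−f_J(K)−f_J(ijK) = 0, exactly for those elementary triplets (i,j|K) for which NOT both i,j ∈ J and K ∩ J = ∅; consequently f_J lies on exactly C(n,2)·2^(n−2) − C(k,2)·2^(n−k) of the C(n,2)·2^(n−2) elementary inequality hyperplanes. -/

import Mathlib

open Finset

variable {α : Type*} [Fintype α] [DecidableEq α]

/-- `f_J(A) = 1` if `J ∩ A ≠ ∅`, else `0`. -/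
def fJ (J : Finset α) : Finset α → ℝ := fun A => if (J ∩ A).Nonempty then 1 else 0

/-- `f_J` satisfies the elementary inequality `(i,j|K)` with equality exactly when
not both `i,j ∈ J` with `K ∩ J = ∅`; consequently, counting unordered pairs
`{i,j}` together with `K`, `f_J` lies on exactly
`C(n,2)·2^(n−2) − C(k,2)·2^(n−k)` of the elementary hyperplanes. -/
theorem fJ_weight (J : Finset α) (hJ : 2 ≤ J.card) (hn : 2 ≤ Fintype.card α) :
    (∀ i j : α, ∀ K : Finset α, i ≠ j → i ∉ K → j ∉ K →
      (fJ J (insert i K) + fJ J (insert j K) - fJ J K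
          - fJ J (insert i (insert j K)) = 0 ↔
        ¬(i ∈ J ∧ j ∈ J ∧ Disjoint K J))) ∧
    ((Finset.univ : Finset (Finset α × Finset α)).filter (fun pK =>
        pK.1.card = 2 ∧ Disjoint pK.1 pK.2 ∧
          ¬(pK.1 ⊆ J ∧ Disjoint pK.2 J))).card =
      (Fintype.card α).choose 2 * 2 ^ (Fintype.card α - 2)
        - J.card.choose 2 * 2 ^ (Fintype.card α - J.card) := by
  constructor
  · intro i j K hij hiK hjK
    have hcomm : Disjoint K J ↔ ¬(J ∩ K).Nonempty := by
      rw [disjoint_comm, ← Finset.not_disjoint_iff_nonempty_inter, not_not]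
    by_cases hi : i ∈ J <;> by_cases hj : j ∈ J <;> by_cases hK : (J ∩ K).Nonempty <;>
      simp [fJ, Finset.inter_insert_of_mem, Finset.inter_insert_of_notMem, hi, hj, hK,
        hcomm, Finset.insert_nonempty]
  · classical
    set S : Finset (Finset α × Finset α) :=
      univ.filter (fun pK => pK.1.card = 2 ∧ Disjoint pK.1 pK.2) with hS
    have hScard : S.card = (Fintype.card α).choose 2 * 2 ^ (Fintype.card α - 2) := by
      have h1 : S.card = ∑ P ∈ (univ : Finset α).powersetCard 2,
          (S.filter (fun pK => pK.1 = P)).card := by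
        apply Finset.card_eq_sum_card_fiberwise
        intro x hx
        simp only [hS, mem_coe, mem_filter, mem_univ, true_and] at hx
        simp [Finset.mem_powersetCard, hx.1]
      rw [h1]
      have h2 : ∀ P ∈ (univ : Finset α).powersetCard 2,
          (S.filter (fun pK => pK.1 = P)).card = 2 ^ (Fintype.card α - 2) := by
        intro P hP
        rw [Finset.mem_powersetCard] at hP
        have : S.filter (fun pK => pK.1 = P) = {P} ×ˢ Pᶜ.powerset := by
          ext ⟨a, b⟩
          simp only [hS, mem_filter, mem_univ, true_and, mem_product, mem_singleton,
            mem_powerset]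
          constructor
          · rintro ⟨⟨_, hd⟩, rfl⟩
            exact ⟨rfl, fun x hxb => mem_compl.mpr fun hxP =>
              (Finset.disjoint_left.mp hd hxP) hxb⟩
          · rintro ⟨rfl, hb⟩
            refine ⟨⟨hP.2, ?_⟩, rfl⟩
            exact Finset.disjoint_left.mpr fun x hx hxb => (mem_compl.mp (hb hxb)) hx
        rw [this, Finset.card_product, Finset.card_singleton, Finset.card_powerset,
          Finset.card_compl, hP.2, one_mul]
      rw [Finset.sum_congr rfl h2, Finset.sum_const, smul_eq_mul,
        Finset.card_powersetCard, Finset.card_univ]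
    have hBsub : S.filter (fun pK => pK.1 ⊆ J ∧ Disjoint pK.2 J)
        = J.powersetCard 2 ×ˢ Jᶜ.powerset := by
      ext ⟨a, b⟩
      simp only [hS, Finset.filter_filter, mem_filter, mem_univ, true_and, mem_product,
        Finset.mem_powersetCard, mem_powerset]
      constructor
      · rintro ⟨⟨hc, _⟩, haJ, hbJ⟩
        exact ⟨⟨haJ, hc⟩, fun x hx => mem_compl.mpr fun hxJ =>
          (Finset.disjoint_left.mp hbJ hx) hxJ⟩
      · rintro ⟨⟨haJ, hc⟩, hb⟩
        have hbJ : Disjoint b J := Finset.disjoint_left.mpr fun x hx hxJ =>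
          (mem_compl.mp (hb hx)) hxJ
        exact ⟨⟨hc, Finset.disjoint_left.mpr fun x hx hxb =>
          (mem_compl.mp (hb hxb)) (haJ hx)⟩, haJ, hbJ⟩
    have hBcard : (S.filter (fun pK => pK.1 ⊆ J ∧ Disjoint pK.2 J)).card
        = J.card.choose 2 * 2 ^ (Fintype.card α - J.card) := by
      rw [hBsub, Finset.card_product, Finset.card_powersetCard, Finset.card_powerset,
        Finset.card_compl]
    have key : (univ.filter (fun pK : Finset α × Finset α =>
        pK.1.card = 2 ∧ Disjoint pK.1 pK.2 ∧ ¬(pK.1 ⊆ J ∧ Disjoint pK.2 J)))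
        = S.filter (fun pK => ¬(pK.1 ⊆ J ∧ Disjoint pK.2 J)) := by
      simp [hS, Finset.filter_filter, and_assoc]
    rw [key, Finset.filter_not, Finset.card_sdiff_of_subset (Finset.filter_subset _ _), hScard, hBcard]
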